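/- Clausen's identity: for real a, b with a+b+1/2 not a nonpositive integer and |z| < 1, the square of ∑_{n=0}^∞ ((a)_n (b)_n)/((a+b+1/2)_n (1)_n) zⁿ equals ∑_{n=0}^∞ ((2a)_n (2b)_n (a+b)_n)/((a+b+1/2)_n (2a+2b)_n (1)_n) zⁿ. -/

import Mathlib

open Real

noncomputable def poch (a : ℝ) (n : ℕ) : ℝ := (ascPochhammer ℝ n).eval a

/-!
Comparing coefficients, it suffices to show that the Cauchy square
`S n = ∑_{k+m=n} A k A m` of the ₂F₁ coefficients `A` equals the ₃F₂ coefficient `B n`.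
Both sequences start at `1` and satisfy the first-order recurrence
`Q n · u (n+1) = P n · u n`, where `P n / Q n = B (n+1) / B n`. For `S` this is
Zeilberger's creative telescoping: with `F n k = A k A (n-k)` and `G n k = g n k · F (n+1) k`
for an explicit rational certificate `g`, one has
`Q n · F (n+1) k - P n · F n k = G n (k+1) - G n k`. Summing over `k ≤ n`, the right-hand
side telescopes to `-Q n · F (n+1) (n+1)`, which is exactly the term of `Q n · S (n+1)`
missing on the left.
-/

open Finset

lemma poch_zero (x : ℝ) : poch x 0 = 1 := by simp [poch]

lemma poch_succ (x : ℝ) (n : ℕ) : poch x (n + 1) = poch x n * (x + n) :=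
  ascPochhammer_succ_eval n x

lemma add_natCast_ne_zero_of_poch_succ_ne_zero {x : ℝ} {n : ℕ} (h : poch x (n + 1) ≠ 0) :
    x + n ≠ 0 :=
  right_ne_zero_of_mul (poch_succ x n ▸ h)

lemma eq_of_mul_succ_eq_mul {K : Type*} [MulZeroClass K] [IsLeftCancelMulZero K]
    {p q u v : ℕ → K}
    (hq : ∀ n, q n ≠ 0) (hu : ∀ n, q n * u (n + 1) = p n * u n)
    (hv : ∀ n, q n * v (n + 1) = p n * v n) (h0 : u 0 = v 0) : u = v := by
  funext n
  induction n with
  | zero => exact h0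
  | succ n ih => exact mul_left_cancel₀ (hq n) (by rw [hu, hv, ih])

lemma tsum_mul_pow_mul_tsum_mul_pow {R : Type*} [NormedCommRing R] [CompleteSpace R]
    {f g : ℕ → R} {z : R} (hf : Summable fun n => ‖f n * z ^ n‖)
    (hg : Summable fun n => ‖g n * z ^ n‖) :
    (∑' n, f n * z ^ n) * ∑' n, g n * z ^ n
      = ∑' n, (∑ k ∈ range (n + 1), f k * g (n - k)) * z ^ n := by
  rw [tsum_mul_tsum_eq_tsum_sum_range_of_summable_norm hf hg]
  refine tsum_congr fun n => ?_
  rw [sum_mul]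
  refine sum_congr rfl fun k hk => ?_
  rw [mul_mul_mul_comm, ← pow_add, Nat.add_sub_cancel' (Nat.lt_succ_iff.mp (mem_range.mp hk))]

noncomputable def coeff2F1 (a b : ℝ) (k : ℕ) : ℝ :=
  poch a k * poch b k / (poch (a + b + 1/2) k * poch 1 k)

noncomputable def coeff3F2 (a b : ℝ) (n : ℕ) : ℝ :=
  poch (2*a) n * poch (2*b) n * poch (a+b) n /
    (poch (a + b + 1/2) n * poch (2*a + 2*b) n * poch 1 n)

noncomputable def ratioNum3F2 (a b : ℝ) (n : ℕ) : ℝ := (2*a + n) * (2*b + n) * (a + b + n)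

noncomputable def ratioDen3F2 (a b : ℝ) (n : ℕ) : ℝ :=
  (a + b + 1/2 + n) * (2*a + 2*b + n) * (n + 1)

lemma coeff2F1_succ (a b : ℝ) (k : ℕ) :
    coeff2F1 a b (k + 1)
      = coeff2F1 a b k * ((a + k) * (b + k) / ((a + b + 1/2 + k) * (k + 1))) := by
  rw [coeff2F1, coeff2F1, poch_succ, poch_succ, poch_succ, poch_succ, div_mul_div_comm]
  congr 1 <;> ring

lemma coeff3F2_succ (a b : ℝ) (n : ℕ) :
    coeff3F2 a b (n + 1) = coeff3F2 a b n * (ratioNum3F2 a b n / ratioDen3F2 a b n) := by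
  simp only [coeff3F2, ratioNum3F2, ratioDen3F2, poch_succ]
  rw [div_mul_div_comm]
  congr 1 <;> ring

lemma coeff3F2_recurrence {a b : ℝ} {n : ℕ} (h : ratioDen3F2 a b n ≠ 0) :
    ratioDen3F2 a b n * coeff3F2 a b (n + 1) = ratioNum3F2 a b n * coeff3F2 a b n := by
  rw [coeff3F2_succ]
  field_simp

-- Found by Zeilberger's algorithm.
noncomputable def clausenCertificate (a b : ℝ) (n k : ℕ) : ℝ :=
  k * (2*k^2 - 3*(n+1)*k + (1 + 3*n/2 - (a+b)*(1+3*n) - 2*(a+b)^2))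

lemma clausenCertificate_zero (a b : ℝ) (n : ℕ) : clausenCertificate a b n 0 = 0 := by
  simp [clausenCertificate]

lemma clausenCertificate_succ_self (a b : ℝ) (n : ℕ) :
    clausenCertificate a b n (n + 1) = -ratioDen3F2 a b n := by
  simp only [clausenCertificate, ratioDen3F2]
  push_cast
  ring

lemma clausenCertificate_spec (a b : ℝ) (k m : ℕ) :
    ratioDen3F2 a b (k + m) * ((a + m) * (b + m)) * ((a + b + 1/2 + k) * (k + 1))
      = ratioNum3F2 a b (k + m) * ((a + b + 1/2 + m) * (m + 1)) * ((a + b + 1/2 + k) * (k + 1))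
        + clausenCertificate a b (k + m) (k + 1) * ((a + k) * (b + k))
            * ((a + b + 1/2 + m) * (m + 1))
        - clausenCertificate a b (k + m) k * ((a + m) * (b + m))
            * ((a + b + 1/2 + k) * (k + 1)) := by
  simp only [ratioDen3F2, ratioNum3F2, clausenCertificate]
  push_cast
  ring

lemma coeff2F1_creative_telescoping {a b : ℝ} {k m : ℕ} (hk : a + b + 1/2 + k ≠ 0)
    (hm : a + b + 1/2 + m ≠ 0) :
    ratioDen3F2 a b (k + m) * (coeff2F1 a b k * coeff2F1 a b (m + 1))
      = ratioNum3F2 a b (k + m) * (coeff2F1 a b k * coeff2F1 a b m)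
        + (clausenCertificate a b (k + m) (k + 1) * (coeff2F1 a b (k + 1) * coeff2F1 a b m)
          - clausenCertificate a b (k + m) k * (coeff2F1 a b k * coeff2F1 a b (m + 1))) := by
  have hdk : (a + b + 1/2 + k) * (k + 1) ≠ 0 := mul_ne_zero hk k.cast_add_one_ne_zero
  have hdm : (a + b + 1/2 + m) * (m + 1) ≠ 0 := mul_ne_zero hm m.cast_add_one_ne_zero
  have key := clausenCertificate_spec a b k m
  rw [coeff2F1_succ a b k, coeff2F1_succ a b m]
  generalize (a + b + 1/2 + k) * (k + 1) = dk at hdk key ⊢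
  generalize (a + b + 1/2 + m) * (m + 1) = dm at hdm key ⊢
  field_simp
  linear_combination coeff2F1 a b k * coeff2F1 a b m * key

lemma sum_coeff2F1_mul_recurrence {a b : ℝ} (hc : ∀ j : ℕ, a + b + 1/2 + j ≠ 0) (n : ℕ) :
    ratioDen3F2 a b n * ∑ k ∈ range (n + 2), coeff2F1 a b k * coeff2F1 a b (n + 1 - k)
      = ratioNum3F2 a b n * ∑ k ∈ range (n + 1), coeff2F1 a b k * coeff2F1 a b (n - k) := by
  set G : ℕ → ℝ := fun j =>
    clausenCertificate a b n j * (coeff2F1 a b j * coeff2F1 a b (n + 1 - j))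
  have hterm : ∀ k ∈ range (n + 1),
      ratioDen3F2 a b n * (coeff2F1 a b k * coeff2F1 a b (n + 1 - k))
        = ratioNum3F2 a b n * (coeff2F1 a b k * coeff2F1 a b (n - k)) + (G (k + 1) - G k) := by
    intro k hk
    obtain ⟨m, rfl⟩ := Nat.exists_eq_add_of_le (Nat.lt_succ_iff.mp (mem_range.mp hk))
    simp only [G, show k + m + 1 - k = m + 1 by omega, show k + m - k = m by omega,
      show k + m + 1 - (k + 1) = m by omega]
    exact coeff2F1_creative_telescoping (hc k) (hc m)
  calc ratioDen3F2 a b n * ∑ k ∈ range (n + 2), coeff2F1 a b k * coeff2F1 a b (n + 1 - k)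
      = ∑ k ∈ range (n + 1), ratioDen3F2 a b n * (coeff2F1 a b k * coeff2F1 a b (n + 1 - k))
          + ratioDen3F2 a b n * (coeff2F1 a b (n + 1) * coeff2F1 a b 0) := by
        rw [sum_range_succ, mul_add, mul_sum, Nat.sub_self]
    _ = ratioNum3F2 a b n * ∑ k ∈ range (n + 1), coeff2F1 a b k * coeff2F1 a b (n - k)
          + (G (n + 1) - G 0) + ratioDen3F2 a b n * (coeff2F1 a b (n + 1) * coeff2F1 a b 0) := by
        rw [sum_congr rfl hterm, sum_add_distrib, sum_range_sub, mul_sum]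
    _ = ratioNum3F2 a b n * ∑ k ∈ range (n + 1), coeff2F1 a b k * coeff2F1 a b (n - k) := by
        simp only [G, clausenCertificate_zero, clausenCertificate_succ_self, Nat.sub_self]
        ring

theorem stmt_19_general (a b z : ℝ)
    (hab : ∀ m : ℕ, a + b + 1/2 ≠ -(m : ℝ))
    (hden2 : ∀ n : ℕ, poch (2*a + 2*b) n ≠ 0)
    (hsum1 : Summable (fun n : ℕ => |poch a n * poch b n / (poch (a + b + 1/2) n * poch 1 n) * z^n|)) :
    (∑' n : ℕ, poch a n * poch b n / (poch (a + b + 1/2) n * poch 1 n) * z^n)^2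
      = ∑' n : ℕ, poch (2*a) n * poch (2*b) n * poch (a+b) n / (poch (a + b + 1/2) n * poch (2*a + 2*b) n * poch 1 n) * z^n := by
  have hc : ∀ m : ℕ, a + b + 1/2 + m ≠ 0 := fun m h => hab m (by linarith)
  have hden : ∀ n, ratioDen3F2 a b n ≠ 0 := fun n =>
    mul_ne_zero (mul_ne_zero (hc n) (add_natCast_ne_zero_of_poch_succ_ne_zero (hden2 (n + 1))))
      n.cast_add_one_ne_zero
  have hcoeff : (fun n => ∑ k ∈ range (n + 1), coeff2F1 a b k * coeff2F1 a b (n - k))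
      = coeff3F2 a b :=
    eq_of_mul_succ_eq_mul hden (sum_coeff2F1_mul_recurrence hc)
      (fun n => coeff3F2_recurrence (hden n)) (by simp [coeff2F1, coeff3F2, poch_zero])
  calc (∑' n, coeff2F1 a b n * z ^ n) ^ 2
      = ∑' n, (∑ k ∈ range (n + 1), coeff2F1 a b k * coeff2F1 a b (n - k)) * z ^ n :=
        (sq _).trans (tsum_mul_pow_mul_tsum_mul_pow hsum1 hsum1)
    _ = ∑' n, coeff3F2 a b n * z ^ n := by simp only [← hcoeff]

theorem stmt_19 (a b z : ℝ)
    (hab : ∀ m : ℕ, a + b + 1/2 ≠ -(m : ℝ))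
    (hz : |z| < 1)
    (hden1 : ∀ n : ℕ, poch (a + b + 1/2) n ≠ 0)
    (hden2 : ∀ n : ℕ, poch (2*a + 2*b) n ≠ 0)
    (hsum1 : Summable (fun n : ℕ => |poch a n * poch b n / (poch (a + b + 1/2) n * poch 1 n) * z^n|))
    (hsum2 : Summable (fun n : ℕ => |poch (2*a) n * poch (2*b) n * poch (a+b) n / (poch (a + b + 1/2) n * poch (2*a + 2*b) n * poch 1 n) * z^n|)) :
    (∑' n : ℕ, poch a n * poch b n / (poch (a + b + 1/2) n * poch 1 n) * z^n)^2
      = ∑' n : ℕ, poch (2*a) n * poch (2*b) n * poch (a+b) n / (poch (a + b + 1/2) n * poch (2*a + 2*b) n * poch 1 n) * z^n :=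
  stmt_19_general a b z hab hden2 hsum1
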